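/- arXiv:2009.02091 — 6 statements merged into one kernel-verified Lean document; each statement's English description precedes it below -/
import Mathlib

section
/- (Fish lemma for P-submodular systems) Let r, s ∈ S be two crossing unoriented separations and t ∈ S a separation nested with both r and s. If orientations r', s' of r and s have a supremum r' ∨ s' in the poset S, then r' ∨ s' is nested with t. Dually, if an infimum r' ∧ s' exists in S, it is nested with t. -/
variable {α : Type*}

section Defs
variable [PartialOrder α] (star : α → α)

/-- Two (oriented) separations are nested if they admit comparable orientations. -/
def Nested (r s : α) : Prop :=
  ∃ r' ∈ ({r, star r} : Set α), ∃ s' ∈ ({s, star s} : Set α), r' ≤ s'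

/-- `O` is an orientation of `S`: it contains exactly one orientation of each separation in `S`. -/
def IsOrientation (S O : Set α) : Prop :=
  O ⊆ S ∧ ∀ s ∈ S, (s ∈ O ↔ star s ∉ O)

/-- A consistent set of oriented separations: it contains no `r`, `s` with `star r ≤ s`
unless `r` and `s` have the same underlying unoriented separation. -/
def Consistent (O : Set α) : Prop :=
  ∀ r ∈ O, ∀ s ∈ O, star r ≤ s → r = s ∨ star r = s

/-- `u` is a supremum of `r` and `s` within the subposet `S`. -/
def SupIn (S : Set α) (r s u : α) : Prop :=
  u ∈ S ∧ r ≤ u ∧ s ≤ u ∧ ∀ t ∈ S, r ≤ t → s ≤ t → u ≤ t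

/-- `u` is an infimum of `r` and `s` within the subposet `S`. -/
def InfIn (S : Set α) (r s u : α) : Prop :=
  u ∈ S ∧ u ≤ r ∧ u ≤ s ∧ ∀ t ∈ S, t ≤ r → t ≤ s → t ≤ u

/-- `u` is a `Ps`-join of `r` and `s` in `S`. -/
def PJoin (S : Set α) (Ps : Set (Set α)) (r s u : α) : Prop :=
  SupIn S r s u ∧ ∀ P ∈ Ps, r ∈ P → s ∈ P → u ∈ P

/-- `u` is a `Ps`-meet of `r` and `s` in `S`. -/
def PMeet (S : Set α) (Ps : Set (Set α)) (r s u : α) : Prop :=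
  InfIn S r s u ∧ ∀ P ∈ Ps, star r ∈ P → star s ∈ P → star u ∈ P

/-- `S` is `Ps`-submodular: every two crossing separations in `S` have a `Ps`-join
or a `Ps`-meet in `S`. -/
def PSubmodular (S : Set α) (Ps : Set (Set α)) : Prop :=
  ∀ r ∈ S, ∀ s ∈ S, ¬ Nested star r s →
    (∃ u, PJoin S Ps r s u) ∨ (∃ u, PMeet star S Ps r s u)

/-- `s` is exclusive for `Ps`: it lies in exactly one member of `Ps`. -/
def Exclusive (Ps : Set (Set α)) (s : α) : Prop :=
  ∃! P, P ∈ Ps ∧ s ∈ P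

/-- `s` is `P`-exclusive for `Ps`: it lies in `P` and in no other member of `Ps`. -/
def PExclusive (Ps : Set (Set α)) (P : Set α) (s : α) : Prop :=
  s ∈ P ∧ ∀ Q ∈ Ps, s ∈ Q → Q = P

/-- `MP Ps P` is the set of maximal `P`-exclusive separations. -/
def MP (Ps : Set (Set α)) (P : Set α) : Set α :=
  {r | PExclusive Ps P r ∧ ∀ s, PExclusive Ps P s → r ≤ s → r = s}

/-- `s` distinguishes the orientations `P` and `Q`. -/
def Distinguishes (s : α) (P Q : Set α) : Prop :=
  (s ∈ P ∧ star s ∈ Q) ∨ (star s ∈ P ∧ s ∈ Q)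

end Defs

/-- Unpack nestedness into a four-way disjunction. -/
lemma nested_cases [PartialOrder α] (star : α → α)
    (hinv : ∀ s, star (star s) = s)
    (hrev : ∀ r s : α, r ≤ s ↔ star s ≤ star r)
    {t r : α} (h : Nested star t r) :
    (t ≤ r ∨ star t ≤ r) ∨ (r ≤ t ∨ r ≤ star t) := by
  obtain ⟨t', ht', r', hr', hle⟩ := h
  rcases ht' with rfl | rfl <;> rcases hr' with rfl | rfl
  · exact Or.inl (Or.inl hle)
  · refine Or.inr (Or.inr ?_)
    rw [hrev, hinv]; exact hle
  · exact Or.inl (Or.inr hle)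
  · refine Or.inr (Or.inl ?_)
    rw [hrev]; exact hle

lemma nested_of_le [PartialOrder α] (star : α → α)
    {u t : α} (h : u ≤ t) : Nested star u t :=
  ⟨u, Or.inl rfl, t, Or.inl rfl, h⟩

lemma nested_of_le_star [PartialOrder α] (star : α → α)
    {u t : α} (h : u ≤ star t) : Nested star u t :=
  ⟨u, Or.inl rfl, star t, Or.inr rfl, h⟩

lemma nested_of_ge [PartialOrder α] (star : α → α)
    (hrev : ∀ r s : α, r ≤ s ↔ star s ≤ star r)
    {u t : α} (h : t ≤ u) : Nested star u t :=
  ⟨star u, Or.inr rfl, star t, Or.inr rfl, (hrev t u).1 h⟩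

lemma nested_of_star_ge [PartialOrder α] (star : α → α)
    (hinv : ∀ s, star (star s) = s)
    (hrev : ∀ r s : α, r ≤ s ↔ star s ≤ star r)
    {u t : α} (h : star t ≤ u) : Nested star u t :=
  ⟨star u, Or.inr rfl, t, Or.inl rfl, by
    have := (hrev (star t) u).1 h
    rwa [hinv] at this⟩

/-- Fish lemma: if `r` and `s` cross and `t` is nested with both, then any
supremum (or infimum) of `r` and `s` in `S` is nested with `t`. -/
theorem fish_lemma [PartialOrder α] (star : α → α)
    (hinv : ∀ s, star (star s) = s)
    (hrev : ∀ r s : α, r ≤ s ↔ star s ≤ star r)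
    (S : Set α) (hS : ∀ s ∈ S, star s ∈ S)
    (r s t : α) (hr : r ∈ S) (hs : s ∈ S) (ht : t ∈ S)
    (hcross : ¬ Nested star r s)
    (htr : Nested star t r) (hts : Nested star t s) :
    (∀ u, SupIn S r s u → Nested star u t) ∧
    (∀ u, InfIn S r s u → Nested star u t) := by
  have hcr : ∀ {a b : α}, r ≤ a → s ≤ b → a = star b → False := by
    intro a b h1 h2 hab
    subst hab
    apply hcross
    -- r ≤ star b and s ≤ b give r ≤ star b, s ≤ b, so star b vs b…
    -- from s ≤ b: star b ≤ star s, so r ≤ star s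
    have : star b ≤ star s := (hrev s b).1 h2
    exact ⟨r, Or.inl rfl, star s, Or.inr rfl, le_trans h1 this⟩
  have hcr' : ∀ {a b : α}, a ≤ r → b ≤ s → a = star b → False := by
    intro a b h1 h2 hab
    subst hab
    apply hcross
    -- star b ≤ r, b ≤ s: star r ≤ b ≤ s
    have : star r ≤ b := by
      have := (hrev (star b) r).1 h1
      rwa [hinv] at this
    exact ⟨star r, Or.inr rfl, s, Or.inl rfl, le_trans this h2⟩
  rcases nested_cases star hinv hrev htr with hr1 | hr1 <;>
  rcases nested_cases star hinv hrev hts with hs1 | hs1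
  all_goals constructor <;> intro u hu <;>
    obtain ⟨huS, hru, hsu, hmax⟩ := hu
  -- case 1: t' ≤ r, t'' ≤ s
  · rcases hr1 with h | h
    · exact nested_of_ge star hrev (h.trans hru)
    · exact nested_of_star_ge star hinv hrev (h.trans hru)
  · rcases hr1 with h | h <;> rcases hs1 with h' | h'
    · exact nested_of_ge star hrev (hmax t ht h h')
    · exact (hcr' h h' (hinv t).symm).elim
    · exact (hcr' h h' rfl).elim
    · exact nested_of_star_ge star hinv hrev (hmax (star t) (hS t ht) h h')
  -- case 2: t' ≤ r, s ≤ t''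
  · rcases hr1 with h | h
    · exact nested_of_ge star hrev (h.trans hru)
    · exact nested_of_star_ge star hinv hrev (h.trans hru)
  · rcases hs1 with h | h
    · exact nested_of_le star (hsu.trans h)
    · exact nested_of_le_star star (hsu.trans h)
  -- case 3: r ≤ t', t'' ≤ s
  · rcases hs1 with h | h
    · exact nested_of_ge star hrev (h.trans hsu)
    · exact nested_of_star_ge star hinv hrev (h.trans hsu)
  · rcases hr1 with h | h
    · exact nested_of_le star (hru.trans h)
    · exact nested_of_le_star star (hru.trans h)
  -- case 4: r ≤ t', s ≤ t''
  · rcases hr1 with h | h <;> rcases hs1 with h' | h'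
    · exact nested_of_le star (hmax t ht h h')
    · exact (hcr h h' (hinv t).symm).elim
    · exact (hcr h h' rfl).elim
    · exact nested_of_le_star star (hmax (star t) (hS t ht) h h')
  · rcases hr1 with h | h
    · exact nested_of_le star (hru.trans h)
    · exact nested_of_le_star star (hru.trans h)
end

section
/- Let S be a separation system and P a collection of consistent orientations of S such that S is P-submodular. For distinct P, P' ∈ P, every maximal P-exclusive separation r (i.e. r ∈ M_P) is nested with every maximal P'-exclusive separation s (i.e. s ∈ M_{P'}). -/
variable {α : Type*}

/-- Maximal exclusive separations of distinct orientations are nested. -/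
theorem nested_between [PartialOrder α] (star : α → α)
    (hinv : ∀ s, star (star s) = s)
    (hrev : ∀ r s : α, r ≤ s ↔ star s ≤ star r)
    (S : Set α) (hS : ∀ s ∈ S, star s ∈ S)
    (Ps : Set (Set α))
    (hPs : ∀ P ∈ Ps, IsOrientation star S P ∧ Consistent star P)
    (hsub : PSubmodular star S Ps)
    (P P' : Set α) (hP : P ∈ Ps) (hP' : P' ∈ Ps) (hne : P ≠ P')
    (r s : α) (hr : r ∈ MP Ps P) (hs : s ∈ MP Ps P') :
    Nested star r s := by
  by_contra hns
  obtain ⟨⟨hrP, hrEx⟩, hrMax⟩ := hr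
  obtain ⟨⟨hsP', hsEx⟩, hsMax⟩ := hs
  have hrS : r ∈ S := (hPs P hP).1.1 hrP
  have hsS : s ∈ S := (hPs P' hP').1.1 hsP'
  have hssS : star s ∈ S := hS s hsS
  -- s ∉ P, so star s ∈ P
  have hsnP : s ∉ P := fun h => hne (hsEx P hP h)
  have hssP : star s ∈ P := by
    have := (hPs P hP).1.2 s hsS
    by_contra hc
    exact hsnP (this.mpr (by simpa using hc))
  -- r ∉ P', so star r ∈ P'
  have hrnP' : r ∉ P' := fun h => hne (hrEx P' hP' h).symm
  have hsrP' : star r ∈ P' := by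
    have := (hPs P' hP').1.2 r hrS
    by_contra hc
    exact hrnP' (this.mpr (by simpa using hc))
  -- useful: derive Nested from any comparability
  have nst : ∀ r' ∈ ({r, star r} : Set α), ∀ s' ∈ ({s, star s} : Set α),
      r' ≤ s' → False := fun r' h1 s' h2 h => hns ⟨r', h1, s', h2, h⟩
  -- r crosses star s
  have hcross : ¬ Nested star r (star s) := by
    rintro ⟨r', h1, s', h2, hle⟩
    simp only [Set.mem_insert_iff, Set.mem_singleton_iff, hinv] at h2
    rcases h2 with h2 | h2
    · exact nst r' h1 (star s) (by simp) (h2 ▸ hle)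
    · exact nst r' h1 s (by simp) (h2 ▸ hle)
  rcases hsub r hrS (star s) hssS hcross with ⟨u, ⟨⟨huS, hru, hssu, _⟩, hjoin⟩⟩ |
      ⟨u, ⟨⟨huS, hur, huss, _⟩, hmeet⟩⟩
  · -- join case
    have huP : u ∈ P := hjoin P hP hrP hssP
    have huEx : PExclusive Ps P u := by
      refine ⟨huP, fun Q hQ huQ => ?_⟩
      by_cases hrQ : r ∈ Q
      · exact hrEx Q hQ hrQ
      · have hsrQ : star r ∈ Q := by
          have := (hPs Q hQ).1.2 r hrS
          by_contra hc
          exact hrQ (this.mpr (by simpa using hc))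
        have := (hPs Q hQ).2 (star r) hsrQ u huQ (by rw [hinv]; exact hru)
        rcases this with h | h
        · -- star r = u, but star s ≤ u, so star s ≤ star r, so r ≤ s
          exact absurd ((hrev r s).mpr (h ▸ hssu)) (fun hle => nst r (by simp) s (by simp) hle)
        · rw [hinv] at h
          exact absurd (h ▸ huQ) hrQ
    have hreq : r = u := hrMax u huEx hru
    -- star s ≤ u = r, so star r ≤ s
    exact nst (star r) (by simp) s (by simp) ((hrev (star r) s).mpr (by rw [hinv]; exact hreq ▸ hssu))
  · -- meet case
    have hsu : s ≤ star u := by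
      have := (hrev u (star s)).mp huss
      rwa [hinv] at this
    have hsuP' : star u ∈ P' := hmeet P' hP' hsrP' (by rw [hinv]; exact hsP')
    have hsuEx : PExclusive Ps P' (star u) := by
      refine ⟨hsuP', fun Q hQ hsuQ => ?_⟩
      by_cases hsQ : s ∈ Q
      · exact hsEx Q hQ hsQ
      · have hssQ : star s ∈ Q := by
          have := (hPs Q hQ).1.2 s hsS
          by_contra hc
          exact hsQ (this.mpr (by simpa using hc))
        have := (hPs Q hQ).2 (star s) hssQ (star u) hsuQ (by rw [hinv]; exact hsu)
        rcases this with h | h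
        · -- star s = star u, so s = u, and u ≤ r gives s ≤ r
          have hse : s = u := by rw [← hinv s, h, hinv]
          exact absurd ((hrev (star r) (star s)).mpr (by rw [hinv, hinv]; exact hse ▸ hur))
            (fun hle => nst (star r) (by simp) (star s) (by simp) hle)
        · rw [hinv] at h
          -- s = star u, so star s = u ≤ r, so star r ≤ s
          have hse : star s = u := by rw [h, hinv]
          exact absurd ((hrev (star r) s).mpr (by rw [hinv]; exact hse ▸ hur))
            (fun hle => nst (star r) (by simp) s (by simp) hle)
    have hseq : s = star u := hsMax (star u) hsuEx hsu
    have hse : star s = u := by rw [hseq, hinv]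
    exact nst (star r) (by simp) s (by simp)
      ((hrev (star r) s).mpr (by rw [hinv]; exact hse ▸ hur))
end

section
/- Let S be a separation system and P a set of consistent orientations of S with S P-submodular. If |P| ≥ 2 and P ∈ P, then any two distinct elements of M_P cross. -/
variable {α : Type*}

/-- If `|Ps| ≥ 2`, any two distinct elements of `M_P` cross. -/
theorem mp_cross [PartialOrder α] (star : α → α)
    (hinv : ∀ s, star (star s) = s)
    (hrev : ∀ r s : α, r ≤ s ↔ star s ≤ star r)
    (S : Set α) (hS : ∀ s ∈ S, star s ∈ S)
    (Ps : Set (Set α)) (h2 : Ps.Nontrivial)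
    (hPs : ∀ P ∈ Ps, IsOrientation star S P ∧ Consistent star P)
    (hsub : PSubmodular star S Ps)
    (P : Set α) (hP : P ∈ Ps)
    (r s : α) (hr : r ∈ MP Ps P) (hs : s ∈ MP Ps P) (hne : r ≠ s) :
    ¬ Nested star r s := by
  rintro ⟨r', hr', s', hs', hle⟩
  obtain ⟨⟨hrP, hrEx⟩, hrMax⟩ := hr
  obtain ⟨⟨hsP, hsEx⟩, hsMax⟩ := hs
  obtain ⟨hPor, hPcon⟩ := hPs P hP
  have hrS : r ∈ S := hPor.1 hrP
  have hsS : s ∈ S := hPor.1 hsP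
  obtain ⟨Q, hQ, hQP⟩ : ∃ Q ∈ Ps, Q ≠ P := by
    obtain ⟨a, ha, b, hb, hab⟩ := h2
    by_cases h : a = P
    · exact ⟨b, hb, fun e => hab (h ▸ e).symm⟩
    · exact ⟨a, ha, h⟩
  obtain ⟨hQor, hQcon⟩ := hPs Q hQ
  have hrQ : r ∉ Q := fun h => hQP (hrEx Q hQ h)
  have hsQ : s ∉ Q := fun h => hQP (hsEx Q hQ h)
  have hsrQ : star r ∈ Q := by
    by_contra h; exact hrQ ((hQor.2 r hrS).mpr h)
  have hssQ : star s ∈ Q := by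
    by_contra h; exact hsQ ((hQor.2 s hsS).mpr h)
  simp only [Set.mem_insert_iff, Set.mem_singleton_iff] at hr' hs'
  rcases hr' with h1 | h1 <;> rcases hs' with h2 | h2 <;> rw [h1, h2] at hle <;>
    clear h1 h2
  · exact hne (hrMax s ⟨hsP, hsEx⟩ hle)
  · rcases hQcon _ hsrQ _ hssQ (by rw [hinv]; exact hle) with h | h
    · exact hne (by have := congrArg star h; rwa [hinv, hinv] at this)
    · rw [hinv] at h
      exact ((hPor.2 s hsS).mp hsP) (h ▸ hrP)
  · rcases hPcon r hrP s hsP hle with h | h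
    · exact hne h
    · exact ((hPor.2 s hsS).mp hsP) (by rw [← h, hinv]; exact hrP)
  · exact hne (hsMax r ⟨hrP, hrEx⟩ ((hrev s r).mpr hle)).symm
end

section
/- Let S be a separation system and P a set of consistent orientations of S with S P-submodular. Let S' ⊆ S be the set of separations nested with every element of every M_Q (Q ∈ P), and P' ⊆ P the set of orientations Q with M_Q = ∅ (restricted to S'). Then S' is P'-submodular. -/
variable {α : Type*}

private lemma nested_iff' [PartialOrder α] (star : α → α) (r m : α) :
    Nested star r m ↔ r ≤ m ∨ r ≤ star m ∨ star r ≤ m ∨ star r ≤ star m := by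
  constructor
  · rintro ⟨r', hr', m', hm', hle⟩
    simp only [Set.mem_insert_iff, Set.mem_singleton_iff] at hr' hm'
    rcases hr' with rfl|rfl <;> rcases hm' with rfl|rfl <;> tauto
  · rintro (h|h|h|h)
    exacts [⟨r, by simp, m, by simp, h⟩, ⟨r, by simp, star m, by simp, h⟩,
      ⟨star r, by simp, m, by simp, h⟩, ⟨star r, by simp, star m, by simp, h⟩]

/-- The system `S'` of separations nested with every `M_Q` is `Ps'`-submodular,
where `Ps'` consists of those orientations with empty `M_Q`. -/
theorem restriction_submodular [PartialOrder α] (star : α → α)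
    (hinv : ∀ s, star (star s) = s)
    (hrev : ∀ r s : α, r ≤ s ↔ star s ≤ star r)
    (S : Set α) (hS : ∀ s ∈ S, star s ∈ S)
    (Ps : Set (Set α))
    (hPs : ∀ P ∈ Ps, IsOrientation star S P ∧ Consistent star P)
    (hsub : PSubmodular star S Ps) :
    PSubmodular star
      {t ∈ S | ∀ Q ∈ Ps, ∀ m ∈ MP Ps Q, Nested star t m}
      {Q | Q ∈ Ps ∧ MP Ps Q = ∅} := by
  have key : ∀ a b : α, star a ≤ b ↔ star b ≤ a := by
    intro a b; rw [hrev, hinv]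
  have key2 : ∀ a b : α, a ≤ star b ↔ b ≤ star a := by
    intro a b; rw [hrev, hinv]
  intro r hr s hs hns
  obtain ⟨hrS, hrN⟩ := hr
  obtain ⟨hsS, hsN⟩ := hs
  rcases hsub r hrS s hsS hns with ⟨u, ⟨⟨huS, hru, hsu, hmax⟩, hPj⟩⟩ |
      ⟨u, ⟨⟨huS, hur, hus, hmin⟩, hPj⟩⟩
  · left
    refine ⟨u, ⟨⟨⟨huS, ?_⟩, hru, hsu, fun t ht hrt hst => hmax t ht.1 hrt hst⟩,
      fun P hP' h1 h2 => hPj P hP'.1 h1 h2⟩⟩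
    intro Q hQ m hm
    have hmS : m ∈ S := (hPs Q hQ).1.1 hm.1.1
    rw [nested_iff']
    have hrm := (nested_iff' star r m).1 (hrN Q hQ m hm)
    have hsm := (nested_iff' star s m).1 (hsN Q hQ m hm)
    rcases hrm with h1|h1|h1|h1
    · rcases hsm with h2|h2|h2|h2
      · exact Or.inl (hmax m hmS h1 h2)
      · -- r ≤ m, s ≤ star m : contradiction, r ≤ star s
        exact absurd ((nested_iff' star r s).2
          (Or.inr (Or.inl (h1.trans ((key2 s m).1 h2))))) hns
      · exact Or.inr (Or.inr (Or.inl ((key m u).1 (le_trans ((key s m).1 h2) hsu))))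
      · exact Or.inr (Or.inr (Or.inr ((hrev m u).1 (le_trans ((hrev m s).2 h2) hsu))))
    · rcases hsm with h2|h2|h2|h2
      · -- r ≤ star m, s ≤ m : star r ... m ≤ star r, s ≤ star r → Nested r s via star r ≤ ? 
        -- s ≤ m ≤ star r, so r ≤ star s
        exact absurd ((nested_iff' star r s).2
          (Or.inr (Or.inl ((key2 r s).2 (h2.trans ((key2 r m).1 h1)))))) hns
      · exact Or.inr (Or.inl (hmax (star m) (hS m hmS) h1 h2))
      · exact Or.inr (Or.inr (Or.inl ((key m u).1 (le_trans ((key s m).1 h2) hsu))))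
      · exact Or.inr (Or.inr (Or.inr ((hrev m u).1 (le_trans ((hrev m s).2 h2) hsu))))
    · exact Or.inr (Or.inr (Or.inl ((key m u).1 (le_trans ((key r m).1 h1) hru))))
    · exact Or.inr (Or.inr (Or.inr ((hrev m u).1 (le_trans ((hrev m r).2 h1) hru))))
  · right
    refine ⟨u, ⟨⟨⟨huS, ?_⟩, hur, hus, fun t ht htr hts => hmin t ht.1 htr hts⟩,
      fun P hP' h1 h2 => hPj P hP'.1 h1 h2⟩⟩
    intro Q hQ m hm
    have hmS : m ∈ S := (hPs Q hQ).1.1 hm.1.1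
    rw [nested_iff']
    have hrm := (nested_iff' star r m).1 (hrN Q hQ m hm)
    have hsm := (nested_iff' star s m).1 (hsN Q hQ m hm)
    rcases hrm with h1|h1|h1|h1
    · exact Or.inl (hur.trans h1)
    · exact Or.inr (Or.inl (hur.trans h1))
    · rcases hsm with h2|h2|h2|h2
      · exact Or.inl (hus.trans h2)
      · exact Or.inr (Or.inl (hus.trans h2))
      · -- star r ≤ m, star s ≤ m : star m ≤ r, star m ≤ s
        exact Or.inr (Or.inr (Or.inl ((key u m).2
          (hmin (star m) (hS m hmS) ((key r m).1 h1) ((key s m).1 h2)))))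
      · -- star r ≤ m, star s ≤ star m : star r ≤ m ≤ s → Nested r s
        exact absurd ((nested_iff' star r s).2
          (Or.inr (Or.inr (Or.inl (h1.trans ((hrev m s).2 h2)))))) hns
    · rcases hsm with h2|h2|h2|h2
      · exact Or.inl (hus.trans h2)
      · exact Or.inr (Or.inl (hus.trans h2))
      · -- star r ≤ star m (m ≤ r), star s ≤ m : star s ≤ m ≤ r → star r ≤ s
        exact absurd ((nested_iff' star r s).2
          (Or.inr (Or.inr (Or.inl ((key s r).1 (h2.trans ((hrev m r).2 h1))))))) hns
      · exact Or.inr (Or.inr (Or.inr ((hrev m u).1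
          (hmin m hmS ((hrev m r).2 h1) ((hrev m s).2 h2)))))
end

section
/- Let S be a separation system and P a set of consistent orientations of S with S P-submodular. Suppose N ⊆ S is nested and every separation in N distinguishes some pair of orientations in P. Then N is a tree set: there are no distinct r, s ∈ N with orientations r', s' such that r' ≤ s' and r' ≤ s'*. -/
variable {α : Type*}

/-- A nested set all of whose elements distinguish some pair of orientations in
`Ps` is a tree set. -/
theorem nested_is_tree_set [PartialOrder α] (star : α → α)
    (hinv : ∀ s, star (star s) = s)
    (hrev : ∀ r s : α, r ≤ s ↔ star s ≤ star r)
    (S : Set α) (hS : ∀ s ∈ S, star s ∈ S)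
    (Ps : Set (Set α))
    (hPs : ∀ P ∈ Ps, IsOrientation star S P ∧ Consistent star P)
    (hsub : PSubmodular star S Ps)
    (N : Set α) (hNS : N ⊆ S)
    (hnested : ∀ r ∈ N, ∀ s ∈ N, Nested star r s)
    (hdist : ∀ n ∈ N, ∃ P ∈ Ps, ∃ Q ∈ Ps, P ≠ Q ∧ Distinguishes star n P Q) :
    ∀ r ∈ N, ∀ s ∈ N, r ≠ s → star r ≠ s →
      ∀ r' ∈ ({r, star r} : Set α), ∀ s' ∈ ({s, star s} : Set α),
        ¬ (r' ≤ s' ∧ r' ≤ star s') := by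
  intro r hr s hs hrs hsrs r' hr' s' hs' ⟨h1, h2⟩
  have hinj : Function.Injective star := fun a b h => by
    rw [← hinv a, h, hinv]
  simp only [Set.mem_insert_iff, Set.mem_singleton_iff] at hr' hs'
  have hne1 : r' ≠ s' := by
    rcases hr' with rfl | rfl <;> rcases hs' with rfl | rfl
    · exact hrs
    · intro h; exact hsrs (by rw [h, hinv])
    · exact hsrs
    · intro h; exact hrs (hinj h)
  have hne2 : r' ≠ star s' := by
    rcases hr' with rfl | rfl <;> rcases hs' with rfl | rfl
    · intro h; exact hsrs (by rw [h, hinv])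
    · intro h; exact hrs (by rw [h, hinv])
    · intro h; exact hrs (hinj h)
    · intro h; exact hsrs (by rw [hinj h, hinv])
  -- find an orientation containing `star r'`
  obtain ⟨P, hPmem, Q, hQmem, _, hd⟩ := hdist r hr
  have hO : ∃ O ∈ Ps, star r' ∈ O := by
    rcases hr' with rfl | rfl
    · rcases hd with ⟨_, hb⟩ | ⟨ha, _⟩
      · exact ⟨Q, hQmem, hb⟩
      · exact ⟨P, hPmem, ha⟩
    · rw [hinv]
      rcases hd with ⟨ha, _⟩ | ⟨_, hb⟩
      · exact ⟨P, hPmem, ha⟩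
      · exact ⟨Q, hQmem, hb⟩
  obtain ⟨O, hOmem, hrO⟩ := hO
  obtain ⟨horient, hcons⟩ := hPs O hOmem
  have hs'S : s' ∈ S := by
    rcases hs' with rfl | rfl
    · exact hNS hs
    · exact hS s (hNS hs)
  by_cases hsO : s' ∈ O
  · have := hcons (star r') hrO s' hsO (by rw [hinv]; exact h1)
    rcases this with h | h
    · exact hne2 (by rw [← h, hinv])
    · rw [hinv] at h; exact hne1 h
  · have hssO : star s' ∈ O := by
      by_contra hns
      exact hns (((horient.2 s' hs'S).not_left).mp hsO)
    have hle : s' ≤ star r' := by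
      have := (hrev r' (star s')).mp h2
      rwa [hinv] at this
    have := hcons (star s') hssO (star r') hrO (by rw [hinv]; exact hle)
    rcases this with h | h
    · exact hne1 (hinj h).symm
    · rw [hinv] at h; exact hne2 (by rw [h, hinv])
end

section
/- Let S be a separation system, P a set of consistent orientations of S with S P-submodular, and P ∈ P. Suppose r, s ∈ P cross, r* lies in exactly one Q ∈ P \ {P}, and s* lies in exactly one Q' ∈ P \ {P}, with Q ≠ Q'. If a P-join r ∨ s* exists in S, then r ∨ s* is exclusive for P and does not lie in P. -/
variable {α : Type*}

/-- The corner-separation step: under the stated exclusivity hypotheses, a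
`Ps`-join of `r` and `star s` is exclusive for `Ps` and does not lie in `P`. -/
theorem corner_exclusive [PartialOrder α] (star : α → α)
    (hinv : ∀ s, star (star s) = s)
    (hrev : ∀ r s : α, r ≤ s ↔ star s ≤ star r)
    (S : Set α) (hS : ∀ s ∈ S, star s ∈ S)
    (Ps : Set (Set α))
    (hPs : ∀ P ∈ Ps, IsOrientation star S P ∧ Consistent star P)
    (hsub : PSubmodular star S Ps)
    (P : Set α) (hP : P ∈ Ps)
    (r s : α) (hr : r ∈ P) (hs : s ∈ P) (hcross : ¬ Nested star r s)
    (Q Q' : Set α) (hQ : Q ∈ Ps) (hQP : Q ≠ P) (hQ' : Q' ∈ Ps) (hQ'P : Q' ≠ P)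
    (hQQ' : Q ≠ Q')
    (hrQ : star r ∈ Q) (hrU : ∀ R ∈ Ps, R ≠ P → star r ∈ R → R = Q)
    (hsQ' : star s ∈ Q') (hsU : ∀ R ∈ Ps, R ≠ P → star s ∈ R → R = Q') :
    ∀ u, PJoin S Ps r (star s) u → Exclusive Ps u ∧ u ∉ P := by
  intro u hu
  obtain ⟨⟨huS, hru, hsu, _⟩, hjoin⟩ := hu
  obtain ⟨⟨hPS, hPor⟩, hPcons⟩ := hPs P hP
  have hrS : r ∈ S := hPS hr
  have hsS : s ∈ S := hPS hs
  have key : ∀ R ∈ Ps, u ∈ R → r ∈ R ∧ star s ∈ R := by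
    intro R hR huR
    obtain ⟨⟨hRS, hRor⟩, hRcons⟩ := hPs R hR
    constructor
    · by_contra h
      have hrsR : star r ∈ R := by
        by_contra h2
        exact h ((hRor r hrS).mpr h2)
      have := hRcons (star r) hrsR u huR (by rw [hinv]; exact hru)
      rcases this with h1 | h1
      · have h2 : star s ≤ star r := by rw [h1]; exact hsu
        exact hcross ⟨r, Or.inl rfl, s, Or.inl rfl, (hrev r s).mpr h2⟩
      · rw [hinv] at h1
        have h2 : star s ≤ star (star r) := by rw [hinv, h1]; exact hsu
        exact hcross ⟨star r, Or.inr rfl, s, Or.inl rfl, (hrev (star r) s).mpr h2⟩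
    · by_contra h
      have hsR : s ∈ R := by
        by_contra h2
        exact h (not_not.mp (fun h3 => h2 (((hRor s hsS).mpr) h3)))
      have := hRcons s hsR u huR hsu
      rcases this with h1 | h1
      · exact hcross ⟨r, Or.inl rfl, s, Or.inl rfl, h1 ▸ hru⟩
      · exact hcross ⟨r, Or.inl rfl, star s, Or.inr rfl, h1 ▸ hru⟩
  have hrQ' : r ∈ Q' := by
    by_contra h
    have : star r ∈ Q' := by
      by_contra h2
      exact h (((hPs Q' hQ').1.2 r hrS).mpr h2)
    exact hQQ' (hrU Q' hQ' hQ'P this).symm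
  have huQ' : u ∈ Q' := hjoin Q' hQ' hrQ' hsQ'
  have hnotP : u ∉ P := by
    intro huP
    have := (key P hP huP).2
    exact ((hPor s hsS).mp hs) this
  refine ⟨⟨Q', ⟨hQ', huQ'⟩, ?_⟩, hnotP⟩
  rintro R ⟨hR, huR⟩
  obtain ⟨_, hssR⟩ := key R hR huR
  by_cases hRP : R = P
  · exact absurd (hRP ▸ huR) hnotP
  · exact hsU R hR hRP hssR
end
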